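/- Let F be a closure system on a finite set G. The number of meet-irreducible elements of the lattice of closure systems contained in F equals the number of covering pairs (A,B) in the lattice (F, ⊆). -/

import Mathlib

variable {α : Type*}

/-- A closure system on (the universe of) `α`: contains the full set and is
closed under (nonempty) intersections. -/
def IsClosureSystem (F : Set (Set α)) : Prop :=
  Set.univ ∈ F ∧ ∀ S ⊆ F, S.Nonempty → ⋂₀ S ∈ F

/-- `R` is a closure system contained in `F` (an element of the ideal `↓F`). -/
def DownF (F R : Set (Set α)) : Prop := IsClosureSystem R ∧ R ⊆ F

/-- Models of the implication `A → B`. -/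
def FAB (A B : Set α) : Set (Set α) := {D | ¬ A ⊆ D ∨ B ⊆ D}

/-- Closure operator of a closure system `R`. -/
def clOp (R : Set (Set α)) (X : Set α) : Set α := ⋂₀ {D | D ∈ R ∧ X ⊆ D}

/-- The closure system contained in `F` generated by the family `X`. -/
def genCS (F X : Set (Set α)) : Set (Set α) :=
  ⋂₀ {T | IsClosureSystem T ∧ T ⊆ F ∧ X ⊆ T}

/-- `R'` is covered by `R` in the lattice `↓F` of closure systems contained in `F`. -/
def CoversIn (F R' R : Set (Set α)) : Prop :=
  DownF F R' ∧ DownF F R ∧ R' ⊂ R ∧ ¬ ∃ T, DownF F T ∧ R' ⊂ T ∧ T ⊂ R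

/-- `A` is covered by `B` in the lattice `(F, ⊆)`. -/
def CoversF (F : Set (Set α)) (A B : Set α) : Prop :=
  A ∈ F ∧ B ∈ F ∧ A ⊂ B ∧ ¬ ∃ C ∈ F, A ⊂ C ∧ C ⊂ B

/-- `A` is meet-irreducible in the lattice `(R, ⊆)` of a closure system `R`. -/
def MeetIrredSet (R : Set (Set α)) (A : Set α) : Prop :=
  A ∈ R ∧ A ≠ Set.univ ∧ ¬ ∃ B ∈ R, ∃ C ∈ R, A ⊂ B ∧ A ⊂ C ∧ A = B ∩ C

/-- `R` is meet-irreducible in the lattice `↓F`. -/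
def MeetIrredDown (F R : Set (Set α)) : Prop :=
  DownF F R ∧ R ≠ F ∧ ¬ ∃ T, DownF F T ∧ ∃ U, DownF F U ∧ R ⊂ T ∧ R ⊂ U ∧ R = T ∩ U

/-- `R` is join-irreducible in the lattice `↓F` (bottom is `{univ}`,
join of a family is the generated closure system). -/
def JoinIrredDown (F R : Set (Set α)) : Prop :=
  DownF F R ∧ R ≠ {Set.univ} ∧
    ∀ Y : Set (Set (Set α)), Y.Finite → (∀ T ∈ Y, DownF F T) →
      R = genCS F (⋃₀ Y) → R ∈ Y

/-!
The covering pairs `(A, B)` of `F` are in bijection with the meet-irreducibles of `↓F` via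
`(A, B) ↦ F ∩ FAB A B`, the members of `F` respecting the implication `A → B`. Adding `A` to
`F ∩ FAB A B` gives its unique upper cover, because any `D ∈ F` violating `A → B` yields
`D ∩ B = A` by the covering property. Conversely, a meet-irreducible `R` has the unique upper
cover `insert A R` for any minimal `A ∈ F \ R`; with `B` the `R`-closure of `A`, every
`F ∩ FAB A C` with `C ⊆ B` contains `R` but not `A`, which forces `R = F ∩ FAB A B` and makes
`B` cover `A`.
-/

variable {F R T W : Set (Set α)} {A B D : Set α}

theorem mem_FAB : D ∈ FAB A B ↔ (A ⊆ D → B ⊆ D) :=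
  imp_iff_not_or.symm

namespace IsClosureSystem

theorem sInter_mem (hR : IsClosureSystem R) {S : Set (Set α)} (hS : S ⊆ R) : ⋂₀ S ∈ R := by
  rcases S.eq_empty_or_nonempty with rfl | hne
  · simpa using hR.1
  · exact hR.2 S hS hne

theorem inter_mem (hR : IsClosureSystem R) (hA : A ∈ R) (hB : B ∈ R) : A ∩ B ∈ R := by
  simpa using hR.sInter_mem (Set.pair_subset hA hB)

theorem clOp_mem (hR : IsClosureSystem R) (A : Set α) : clOp R A ∈ R :=
  hR.sInter_mem fun _ hD => hD.1

theorem downF_inter_FAB (hF : IsClosureSystem F) (A B : Set α) : DownF F (F ∩ FAB A B) := by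
  refine ⟨⟨⟨hF.1, Or.inr B.subset_univ⟩, fun S hS hne =>
    ⟨hF.2 S (hS.trans Set.inter_subset_left) hne, ?_⟩⟩, Set.inter_subset_left⟩
  exact mem_FAB.2 fun hA => Set.subset_sInter fun D hD =>
    mem_FAB.1 (hS hD).2 (hA.trans (Set.sInter_subset_of_mem hD))

end IsClosureSystem

theorem subset_clOp (R : Set (Set α)) (A : Set α) : A ⊆ clOp R A :=
  Set.subset_sInter fun _ hD => hD.2

theorem clOp_subset (hD : D ∈ R) (hAD : A ⊆ D) : clOp R A ⊆ D :=
  Set.sInter_subset_of_mem ⟨hD, hAD⟩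

theorem notMem_FAB_of_ssubset (hAB : A ⊂ B) : A ∉ FAB A B :=
  fun h => hAB.not_subset (mem_FAB.1 h subset_rfl)

theorem DownF.insert_of_minimal (hF : IsClosureSystem F) (hR : DownF F R)
    (hA : Minimal (· ∈ F \ R) A) : DownF F (insert A R) := by
  refine ⟨⟨Or.inr hR.1.1, fun S hS hne => ?_⟩, Set.insert_subset hA.1.1 hR.2⟩
  have hSF : S ⊆ F := hS.trans (Set.insert_subset hA.1.1 hR.2)
  by_cases hSR : ⋂₀ S ∈ R
  · exact Or.inr hSR
  by_cases hAS : A ∈ S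
  · exact Or.inl (hA.eq_of_subset ⟨hF.2 S hSF hne, hSR⟩ (Set.sInter_subset_of_mem hAS))
  · have hSR' : S ⊆ R := fun X hX => (hS hX).resolve_left (by rintro rfl; exact hAS hX)
    exact absurd (hR.1.2 S hSR' hne) hSR

namespace CoversF

theorem mem_of_inter_FAB_ssubset (hF : IsClosureSystem F) (h : CoversF F A B)
    (hT : DownF F T) (hsub : F ∩ FAB A B ⊂ T) : A ∈ T := by
  obtain ⟨-, hBF, hAB, hno⟩ := h
  obtain ⟨D, hDT, hDnot⟩ := Set.exists_of_ssubset hsub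
  have hDF : D ∈ F := hT.2 hDT
  have hAD : A ⊆ D := by
    by_contra hAD
    exact hDnot ⟨hDF, Or.inl hAD⟩
  have hBD : ¬ B ⊆ D := fun h => hDnot ⟨hDF, Or.inr h⟩
  have hDB_mem : D ∩ B ∈ T := hT.1.inter_mem hDT (hsub.1 ⟨hBF, Or.inr subset_rfl⟩)
  -- `A ⊆ D ∩ B ⊊ B`, so the covering property collapses `D ∩ B` to `A`
  have hDB_eq : D ∩ B = A := by
    by_contra hne
    exact hno ⟨D ∩ B, hF.inter_mem hDF hBF,
      (Set.subset_inter hAD hAB.subset).ssubset_of_ne (Ne.symm hne),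
      Set.inter_subset_right.ssubset_of_ne fun h => hBD (h ▸ Set.inter_subset_left)⟩
  rwa [hDB_eq] at hDB_mem

theorem meetIrredDown (hF : IsClosureSystem F) (hAB : CoversF F A B) :
    MeetIrredDown F (F ∩ FAB A B) := by
  have hA : A ∉ F ∩ FAB A B := fun h => notMem_FAB_of_ssubset hAB.2.2.1 h.2
  refine ⟨hF.downF_inter_FAB A B, fun h => hA (by rw [h]; exact hAB.1), ?_⟩
  rintro ⟨T, hT, U, hU, hRT, hRU, hRTU⟩
  rw [hRTU] at hA
  exact hA ⟨hAB.mem_of_inter_FAB_ssubset hF hT (hRTU ▸ hRT),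
    hAB.mem_of_inter_FAB_ssubset hF hU (hRTU ▸ hRU)⟩

theorem eq_of_inter_FAB_eq (h : CoversF F A B) {A' B' : Set α} (h' : CoversF F A' B')
    (heq : F ∩ FAB A B = F ∩ FAB A' B') : A = A' ∧ B = B' := by
  have hiff : ∀ D ∈ F, (A ⊆ D → B ⊆ D) ↔ (A' ⊆ D → B' ⊆ D) := fun D hD => by
    simpa [mem_FAB, hD] using Set.ext_iff.1 heq D
  have hA'A : A' ⊆ A := by
    by_contra hA
    exact h.2.2.1.not_subset ((hiff A h.1).2 (fun h => absurd h hA) subset_rfl)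
  have hAA' : A ⊆ A' := by
    by_contra hA
    exact h'.2.2.1.not_subset ((hiff A' h'.1).1 (fun h => absurd h hA) subset_rfl)
  obtain rfl := hAA'.antisymm hA'A
  have hB'B : B' ⊆ B := (hiff B h.2.1).1 (fun _ => subset_rfl) h.2.2.1.subset
  have hBB' : B ⊆ B' := (hiff B' h'.2.1).2 (fun _ => subset_rfl) h'.2.2.1.subset
  exact ⟨rfl, hBB'.antisymm hB'B⟩

end CoversF

namespace MeetIrredDown

theorem mem_of_ssubset (hF : IsClosureSystem F) (hR : MeetIrredDown F R)
    (hA : Minimal (· ∈ F \ R) A) (hW : DownF F W) (hRW : R ⊂ W) : A ∈ W := by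
  by_contra hAW
  refine hR.2.2 ⟨insert A R, hR.1.insert_of_minimal hF hA, W, hW, Set.ssubset_insert hA.1.2,
    hRW, ?_⟩
  rw [Set.insert_inter_of_notMem hAW, Set.inter_eq_left.2 hRW.subset]

theorem exists_coversF [Finite α] (hF : IsClosureSystem F) (hR : MeetIrredDown F R) :
    ∃ A B, CoversF F A B ∧ R = F ∩ FAB A B := by
  obtain ⟨A, hA⟩ := (Set.toFinite (F \ R)).exists_minimal
    (Set.nonempty_of_ssubset (hR.1.2.ssubset_of_ne hR.2.1))
  have hB : clOp R A ∈ R := hR.1.1.clOp_mem A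
  have hAB : A ⊂ clOp R A :=
    (subset_clOp R A).ssubset_of_ne fun h => hA.1.2 (h ▸ hB)
  have hR_sub : ∀ C ⊆ clOp R A, R ⊆ F ∩ FAB A C := fun C hC X hX =>
    ⟨hR.1.2 hX, mem_FAB.2 fun hAX => hC.trans (clOp_subset hX hAX)⟩
  -- a closure system strictly above `R` must contain `A`, which `FAB A C` excludes when `A ⊊ C`
  have hR_eq : ∀ C, A ⊂ C → C ⊆ clOp R A → R = F ∩ FAB A C := fun C hAC hC =>
    (hR_sub C hC).eq_of_not_ssubset fun hlt =>
      notMem_FAB_of_ssubset hAC (hR.mem_of_ssubset hF hA (hF.downF_inter_FAB A C) hlt).2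
  refine ⟨A, clOp R A, ⟨hA.1.1, hR.1.2 hB, hAB, ?_⟩, hR_eq _ hAB subset_rfl⟩
  rintro ⟨C, hCF, hAC, hCB⟩
  by_cases hCR : C ∈ R
  · exact hCB.not_subset (clOp_subset hCR hAC.subset)
  · exact hCR ((hR_eq C hAC hCB.subset).symm ▸ ⟨hCF, Or.inr subset_rfl⟩)

end MeetIrredDown

/-- the number of meet-irreducibles of ↓F equals the number of
covering pairs of (F,⊆). -/
theorem stmt_9 {α : Type*} [Fintype α] (F : Set (Set α)) (hF : IsClosureSystem F) :
    {R : Set (Set α) | MeetIrredDown F R}.ncard =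
      {p : Set α × Set α | CoversF F p.1 p.2}.ncard := by
  have himage : {R : Set (Set α) | MeetIrredDown F R} =
      (fun p : Set α × Set α => F ∩ FAB p.1 p.2) '' {p | CoversF F p.1 p.2} := by
    ext R
    constructor
    · intro hR
      obtain ⟨A, B, hAB, rfl⟩ := hR.exists_coversF hF
      exact ⟨(A, B), hAB, rfl⟩
    · rintro ⟨⟨A, B⟩, hAB, rfl⟩
      exact CoversF.meetIrredDown hF hAB
  rw [himage]
  refine Set.InjOn.ncard_image fun p hp q hq heq => ?_
  obtain ⟨h1, h2⟩ := CoversF.eq_of_inter_FAB_eq hp hq heq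
  exact Prod.ext h1 h2
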